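/- arXiv:2402.00057 — 2 statements merged into one kernel-verified Lean document; each statement's English description precedes it below -/
import Mathlib

section
/- The restricted k-multipartition function p_a^k(n) is a quasi-polynomial in n of degree rk - 1 with period D = lcm(a_1,...,a_r): there exist functions d_m : ℕ → ℚ with d_m(n + D) = d_m(n) for all n, 0 ≤ m ≤ rk-1, such that p_a^k(n) = Σ_{m=0}^{rk-1} d_m(n) n^m for all n ≥ 0, and d_{rk-1} is not identically zero. -/
/-!
Flatten the `r × k` unknowns into `s = r k` unknowns with weights `b` dividing `D`, and let
`f_b(n)` count the solutions of `∑ b_l x_l = n`. Splitting on whether `x_0 = 0` gives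
`Δ_{b_0} f_b(n) = f_{b'}(n + b_0)`, where `b'` forgets `b_0`; since `b_0 ∣ D`, `Δ_D f_b` is a sum
of shifts of `f_{b'}`, and induction on `s` shows `Δ_D^s f_b = 0`, while `Δ_D^{s-1} f_b` is
nonnegative and positive at multiples of `D`. The Gregory–Newton formula then writes
`f_b(c + tD) = ∑_{k<s} C(t, k) Δ_D^k f_b(c)`, a polynomial of degree `< s` in `n = c + tD` whose
coefficient of `n^{s-1}` is `Δ_D^{s-1} f_b(c) / ((s-1)! D^{s-1})`, nonzero for `c = 0`.
-/

open Finset Polynomial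
open scoped fwdDiff Nat

def zeroOrSuccEquiv {Y : Type*} (c : ℕ) (g : Y → ℕ) (m : ℕ) :
    {p : ℕ × Y // c * p.1 + g p.2 = m + c} ≃
      {p : ℕ × Y // c * p.1 + g p.2 = m} ⊕ {y : Y // g y = m + c} where
  toFun
    | ⟨(0, y), h⟩ => .inr ⟨y, by simpa using h⟩
    | ⟨(x + 1, y), h⟩ => .inl ⟨(x, y), by dsimp only at h ⊢; rw [mul_add] at h; omega⟩
  invFun
    | .inl ⟨(x, y), h⟩ => ⟨(x + 1, y), by dsimp only at h ⊢; rw [mul_add]; omega⟩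
    | .inr ⟨y, h⟩ => ⟨(0, y), by simpa using h⟩
  left_inv := by rintro ⟨⟨_ | x, y⟩, h⟩ <;> rfl
  right_inv := by rintro (⟨⟨x, y⟩, h⟩ | ⟨y, h⟩) <;> rfl

-- `ℚ`-valued, so that forward differences can be taken.
noncomputable def repCount {ι : Type*} [Fintype ι] (b : ι → ℕ) (n : ℕ) : ℚ :=
  Nat.card {x : ι → ℕ // ∑ i, b i * x i = n}

section repCount

variable {ι κ : Type*} [Fintype ι] [Fintype κ]

lemma finite_solutions {b : ι → ℕ} (hb : ∀ i, 0 < b i) (n : ℕ) :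
    Finite {x : ι → ℕ // ∑ i, b i * x i = n} := by
  refine Set.Finite.to_subtype ((Set.Finite.pi fun _ => Set.finite_Iic n).subset ?_)
  intro x hx i _
  calc x i ≤ b i * x i := Nat.le_mul_of_pos_left _ (hb i)
    _ ≤ ∑ j, b j * x j :=
      single_le_sum (f := fun j => b j * x j) (fun j _ => Nat.zero_le _) (mem_univ i)
    _ = n := hx

lemma repCount_comp_equiv (e : ι ≃ κ) (b : κ → ℕ) : repCount (b ∘ e) = repCount b := by
  funext n
  refine congrArg Nat.cast (Nat.card_congr ((e.arrowCongr (.refl ℕ)).subtypeEquiv fun x => ?_))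
  simp [← e.sum_comp]

lemma card_curried_eq_repCount (a : ι → ℕ) (n : ℕ) :
    (Nat.card {x : ι → κ → ℕ // ∑ i, ∑ j, a i * x i j = n} : ℚ) =
      repCount (fun q : ι × κ => a q.1) n := by
  refine congrArg Nat.cast (Nat.card_congr (((Equiv.curry ι κ ℕ).symm).subtypeEquiv fun x => ?_))
  simp [Fintype.sum_prod_type]

lemma repCount_fin_succ {s : ℕ} {b : Fin (s + 1) → ℕ} (hb : ∀ i, 0 < b i) (n : ℕ) :
    repCount b (n + b 0) = repCount b n + repCount (Fin.tail b) (n + b 0) := by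
  let g : (Fin s → ℕ) → ℕ := fun y => ∑ i, Fin.tail b i * y i
  have split : ∀ m, {x : Fin (s + 1) → ℕ // ∑ i, b i * x i = m} ≃
      {p : ℕ × (Fin s → ℕ) // b 0 * p.1 + g p.2 = m} := fun m =>
    (Fin.consEquiv fun _ => ℕ).symm.subtypeEquiv fun x => by simp [g, Fin.sum_univ_succ, Fin.tail]
  have := finite_solutions hb n
  have := Finite.of_equiv _ (split n)
  have := finite_solutions (b := Fin.tail b) (fun i => hb _) (n + b 0)
  simp only [repCount]
  rw [Nat.card_congr ((split _).trans (zeroOrSuccEquiv (b 0) g n)), Nat.card_sum,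
    Nat.card_congr (split n)]
  push_cast; rfl

end repCount

section fwdDiff

variable {D s : ℕ}

lemma fwdDiff_repCount_fin_succ {b : Fin (s + 1) → ℕ} (hb : ∀ i, 0 < b i) (hD : b 0 ∣ D) :
    Δ_[D] (repCount b) =
      ∑ j ∈ range (D / b 0), fun n => repCount (Fin.tail b) (n + (j + 1) * b 0) := by
  obtain ⟨q, rfl⟩ := hD
  funext n
  have step : ∀ j, repCount (Fin.tail b) (n + (j + 1) * b 0) =
      repCount b (n + (j + 1) * b 0) - repCount b (n + j * b 0) := fun j => by
    rw [add_one_mul, ← add_assoc, repCount_fin_succ hb]; ring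
  simp only [Finset.sum_apply, step, fwdDiff, Nat.mul_div_cancel_left q (hb 0)]
  rw [sum_range_sub (fun j => repCount b (n + j * b 0)), mul_comm]
  simp

lemma fwdDiff_iter_succ_repCount_fin_succ {b : Fin (s + 1) → ℕ} (hb : ∀ i, 0 < b i)
    (hD : b 0 ∣ D) (k n : ℕ) :
    (Δ_[D])^[k + 1] (repCount b) n =
      ∑ j ∈ range (D / b 0), (Δ_[D])^[k] (repCount (Fin.tail b)) (n + (j + 1) * b 0) := by
  rw [Function.iterate_succ_apply, fwdDiff_repCount_fin_succ hb hD, fwdDiff_iter_finsetSum,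
    Finset.sum_apply]
  exact sum_congr rfl fun j _ => fwdDiff_iter_comp_add _ _ _ _ _

lemma fwdDiff_iter_repCount_eq_zero_of_pos {b : Fin s → ℕ} (hb : ∀ i, 0 < b i)
    (hD : ∀ i, b i ∣ D) {n : ℕ} (hn : 0 < n) : (Δ_[D])^[s] (repCount b) n = 0 := by
  induction s generalizing n with
  | zero => simp [repCount, hn.ne]
  | succ s ih =>
    rw [fwdDiff_iter_succ_repCount_fin_succ hb (hD 0)]
    exact sum_eq_zero fun j _ => ih (fun i => hb _) (fun i => hD _) (by positivity)

lemma fwdDiff_iter_repCount_eq_zero {b : Fin (s + 1) → ℕ} (hb : ∀ i, 0 < b i)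
    (hD : ∀ i, b i ∣ D) :
    (Δ_[D])^[s + 1] (repCount b) = 0 := by
  funext n
  rw [fwdDiff_iter_succ_repCount_fin_succ hb (hD 0)]
  exact sum_eq_zero fun j _ =>
    fwdDiff_iter_repCount_eq_zero_of_pos (fun i => hb _) (fun i => hD _)
      (by have := hb 0; positivity)

lemma fwdDiff_iter_repCount_nonneg {b : Fin (s + 1) → ℕ} (hb : ∀ i, 0 < b i)
    (hD : ∀ i, b i ∣ D) (n : ℕ) :
    0 ≤ (Δ_[D])^[s] (repCount b) n := by
  induction s generalizing n with
  | zero => exact Nat.cast_nonneg _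
  | succ s ih =>
    rw [fwdDiff_iter_succ_repCount_fin_succ hb (hD 0)]
    exact sum_nonneg fun j _ => ih (fun i => hb _) (fun i => hD _) _

lemma fwdDiff_iter_repCount_pos {b : Fin (s + 1) → ℕ} (hb : ∀ i, 0 < b i)
    (hD : ∀ i, b i ∣ D) (hD₀ : 0 < D) {n : ℕ} (hn : D ∣ n) : 0 < (Δ_[D])^[s] (repCount b) n := by
  induction s generalizing n with
  | zero =>
    have hsol : ∑ i, b i * (fun _ => n / b 0) i = n := by
      simpa using Nat.mul_div_cancel' ((hD 0).trans hn)
    have := finite_solutions hb n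
    exact Nat.cast_pos.mpr (Nat.card_pos_iff.mpr ⟨⟨⟨_, hsol⟩⟩, this⟩)
  | succ s ih =>
    have hq : 0 < D / b 0 := Nat.div_pos (Nat.le_of_dvd hD₀ (hD 0)) (hb 0)
    rw [fwdDiff_iter_succ_repCount_fin_succ hb (hD 0)]
    refine sum_pos' (fun j _ => fwdDiff_iter_repCount_nonneg (fun i => hb _) (fun i => hD _) _)
      ⟨D / b 0 - 1, mem_range.mpr (by omega), ih (fun i => hb _) (fun i => hD _) ?_⟩
    rw [Nat.sub_add_cancel hq, Nat.div_mul_cancel (hD 0)]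
    exact dvd_add hn dvd_rfl

end fwdDiff

section Newton

variable {M G : Type*} [AddCommMonoid M] [AddCommGroup G] {h : M} {f : M → G} {s : ℕ}

lemma fwdDiff_iter_eq_zero_of_le (hf : (Δ_[h])^[s] f = 0) {k : ℕ} (hk : s ≤ k) :
    (Δ_[h])^[k] f = 0 := by
  obtain ⟨j, rfl⟩ := Nat.exists_eq_add_of_le hk
  rw [add_comm, Function.iterate_add_apply, hf]
  exact Function.iterate_fixed (fwdDiff_const h 0) j

lemma shift_eq_sum_range_fwdDiff_iter (hf : (Δ_[h])^[s] f = 0) (y : M) (t : ℕ) :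
    f (y + t • h) = ∑ k ∈ range s, t.choose k • (Δ_[h])^[k] f y := by
  rw [shift_eq_sum_fwdDiff_iter h f t y]
  calc _ = ∑ k ∈ range (t + 1 + s), t.choose k • (Δ_[h])^[k] f y :=
        sum_subset (range_subset_range.mpr (by omega)) fun k _ hk => by
          rw [Nat.choose_eq_zero_of_lt (by simpa using hk), zero_smul]
    _ = _ := (sum_subset (range_subset_range.mpr (by omega)) fun k _ hk => by
          rw [fwdDiff_iter_eq_zero_of_le hf (by simpa using hk), Pi.zero_apply, smul_zero]).symm

end Newton

noncomputable def choosePoly (D c k : ℕ) : ℚ[X] :=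
  C (k ! : ℚ)⁻¹ * (descPochhammer ℚ k).comp (C (D : ℚ)⁻¹ * X + C (-c / D : ℚ))

section choosePoly

variable {D : ℕ}

lemma eval_choosePoly (hD : D ≠ 0) (c t k : ℕ) :
    (choosePoly D c k).eval ((c + t * D : ℕ) : ℚ) = t.choose k := by
  have ht : (D : ℚ)⁻¹ * ((c + t * D : ℕ) : ℚ) + -c / D = t := by
    push_cast; field_simp; ring
  rw [choosePoly, eval_mul, eval_C, eval_comp, eval_add, eval_mul, eval_C, eval_X, eval_C, ht,
    descPochhammer_eval_eq_descFactorial, Nat.descFactorial_eq_factorial_mul_choose]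
  push_cast
  field_simp

lemma natDegree_choosePoly (hD : D ≠ 0) (c k : ℕ) : (choosePoly D c k).natDegree = k := by
  have h1 : (C (D : ℚ)⁻¹ * X + C (-c / D : ℚ)).natDegree = 1 := natDegree_linear (by simpa)
  rw [choosePoly, natDegree_C_mul (by positivity), natDegree_comp, h1, descPochhammer_natDegree,
    mul_one]

lemma coeff_choosePoly_self (hD : D ≠ 0) (c k : ℕ) :
    (choosePoly D c k).coeff k = ((k ! : ℚ) * D ^ k)⁻¹ := by
  have h1 : (C (D : ℚ)⁻¹ * X + C (-c / D : ℚ)).natDegree = 1 := natDegree_linear (by simpa)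
  have h2 := coeff_comp_degree_mul_degree (p := descPochhammer ℚ k) (h1 ▸ one_ne_zero)
  rw [h1, descPochhammer_natDegree, mul_one, (monic_descPochhammer ℚ k).leadingCoeff,
    leadingCoeff_linear (by simpa)] at h2
  rw [choosePoly, coeff_C_mul, h2, mul_inv, inv_pow, one_mul]

end choosePoly

noncomputable def newtonPoly (D s : ℕ) (f : ℕ → ℚ) (c : ℕ) : ℚ[X] :=
  ∑ k ∈ range s, C ((Δ_[D])^[k] f c) * choosePoly D c k

section newtonPoly

variable {D s : ℕ} {f : ℕ → ℚ}

lemma natDegree_newtonPoly_lt (hD : D ≠ 0) (hs : s ≠ 0) (c : ℕ) :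
    (newtonPoly D s f c).natDegree < s := by
  have : (newtonPoly D s f c).natDegree ≤ s - 1 := natDegree_sum_le_of_forall_le _ _ fun k hk =>
    (natDegree_C_mul_le _ _).trans
      ((natDegree_choosePoly hD c k).le.trans (by rw [mem_range] at hk; omega))
  omega

lemma eval_newtonPoly (hD : D ≠ 0) (hf : (Δ_[D])^[s] f = 0) (c t : ℕ) :
    (newtonPoly D s f c).eval ((c + t * D : ℕ) : ℚ) = f (c + t * D) := by
  have newton := shift_eq_sum_range_fwdDiff_iter hf c t
  rw [smul_eq_mul] at newton
  rw [newton, newtonPoly, eval_finsetSum]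
  exact sum_congr rfl fun k _ => by
    rw [eval_mul, eval_C, eval_choosePoly hD, nsmul_eq_mul, mul_comm]

lemma coeff_newtonPoly_self (hD : D ≠ 0) (c : ℕ) :
    (newtonPoly D (s + 1) f c).coeff s = (Δ_[D])^[s] f c / (s ! * D ^ s) := by
  rw [newtonPoly, sum_range_succ, coeff_add, finsetSum_coeff, coeff_C_mul,
    coeff_choosePoly_self hD, sum_eq_zero fun k hk => ?_, zero_add, div_eq_mul_inv]
  rw [coeff_C_mul, coeff_eq_zero_of_natDegree_lt, mul_zero]
  rw [natDegree_choosePoly hD]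
  exact mem_range.mp hk

lemma eq_sum_coeff_newtonPoly_mul_pow (hD : 0 < D) (hs : s ≠ 0) (hf : (Δ_[D])^[s] f = 0)
    (n : ℕ) : f n = ∑ m ∈ range s, (newtonPoly D s f (n % D)).coeff m * (n : ℚ) ^ m := by
  have hn : n % D + n / D * D = n := Nat.mod_add_div' n D
  conv_lhs => rw [← hn]
  rw [← eval_newtonPoly hD.ne' hf, hn, eval_eq_sum_range' (natDegree_newtonPoly_lt hD.ne' hs _)]

end newtonPoly

/-- `p_a^k(n)` is a quasi-polynomial of degree `rk-1` with period `D = lcm(a₁,…,a_r)`. -/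
theorem stmt_8 (r k : ℕ) (hr : 1 ≤ r) (hk : 2 ≤ k) (a : Fin r → ℕ)
    (ha : ∀ i, 0 < a i) (D : ℕ) (hD : D = Finset.univ.lcm a) :
    ∃ d : ℕ → ℕ → ℚ,
      (∀ m n, d m (n + D) = d m n) ∧
      (∀ n, (Nat.card {x : Fin r → Fin k → ℕ // ∑ i, ∑ j, a i * x i j = n} : ℚ) =
        ∑ m ∈ Finset.range (r * k), d m n * (n : ℚ) ^ m) ∧
      (∃ n, d (r * k - 1) n ≠ 0) := by
  obtain ⟨s, hs⟩ : ∃ s, r * k = s + 1 :=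
    ⟨r * k - 1, by have := Nat.mul_le_mul hr (by omega : 1 ≤ k); omega⟩
  have haD : ∀ i, a i ∣ D := fun i => hD ▸ dvd_lcm (mem_univ i)
  have hD₀ : 0 < D := Nat.pos_of_ne_zero fun h => by
    obtain ⟨i, -, hi⟩ := lcm_eq_zero_iff.mp (hD ▸ h)
    exact (ha i).ne' hi
  let e : Fin r × Fin k ≃ Fin (s + 1) := finProdFinEquiv.trans (finCongr hs)
  let b : Fin (s + 1) → ℕ := fun l => a (e.symm l).1
  have hcard (n : ℕ) :
      (Nat.card {x : Fin r → Fin k → ℕ // ∑ i, ∑ j, a i * x i j = n} : ℚ) = repCount b n := by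
    rw [card_curried_eq_repCount, ← repCount_comp_equiv e b]
    simp [b, Function.comp_def]
  have hb : ∀ l, 0 < b l := fun l => ha _
  have hbD : ∀ l, b l ∣ D := fun l => haD _
  have hf := fwdDiff_iter_repCount_eq_zero hb hbD
  refine ⟨fun m n => (newtonPoly D (s + 1) (repCount b) (n % D)).coeff m,
    fun m n => by simp, fun n => ?_, ⟨0, ?_⟩⟩
  · rw [hcard, hs]
    exact eq_sum_coeff_newtonPoly_mul_pow hD₀ s.succ_ne_zero hf n
  · simp only [hs, Nat.add_sub_cancel, Nat.zero_mod, coeff_newtonPoly_self hD₀.ne']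
    exact (div_pos (fwdDiff_iter_repCount_pos hb hbD hD₀ (dvd_zero D)) (by positivity)).ne'
end

section
/- For any integer m > 1, the lower asymptotic density of the set {n ≥ 0 : p_a^k(n) ≢ 0 (mod m)} is at least 1/(k·(a_1 + ⋯ + a_r)); i.e., liminf_{N→∞} #{n ≤ N : m ∤ p_a^k(n)}/N ≥ 1/(k Σ_{i=1}^r a_i). -/
/-!
Over any commutative ring the generating function of the denumerant
`p_w(n) = #{x : ∑ i, w i * x i = n}` is the inverse of `Q = ∏ i, (1 - X ^ w i)`, a polynomial of
degree `D = ∑ i, w i` with leading coefficient `±1`. If the inverse of such a polynomial had `D`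
consecutive zero coefficients after index `t`, its truncation below `t + 1` would already be a
polynomial inverse of `Q`, which is impossible in positive degree. Applied over `ZMod m`, every
window `(t, t + D]` contains some `n` with `m ∤ p_w(n)`, so at least `⌊N / D⌋` such `n` lie
in `[0, N]`. The multipartition function `p_a^k` is the denumerant of the weights `a i`, each
repeated `k` times, for which `D = k * ∑ i, a i`.
-/

open scoped Polynomial PowerSeries
open Finset Filter Topology

namespace Polynomial

variable {R : Type*} [CommRing R]

theorem leadingCoeff_one_sub_X_pow {d : ℕ} (hd : 0 < d) :
    (1 - X ^ d : R[X]).leadingCoeff = -1 := by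
  rw [← neg_sub, leadingCoeff_neg, leadingCoeff_X_pow_sub_one hd]

variable {ι : Type*} [Fintype ι] {w : ι → ℕ}

theorem prod_leadingCoeff_one_sub_X_pow (hw : ∀ i, 0 < w i) :
    ∏ i, (1 - X ^ w i : R[X]).leadingCoeff = (-1) ^ Fintype.card ι := by
  simp [leadingCoeff_one_sub_X_pow (hw _)]

variable [Nontrivial R]

theorem natDegree_one_sub_X_pow (d : ℕ) : (1 - X ^ d : R[X]).natDegree = d := by
  rw [← neg_sub, natDegree_neg, ← C_1, natDegree_X_pow_sub_C]

theorem leadingCoeff_prod_one_sub_X_pow (hw : ∀ i, 0 < w i) :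
    (∏ i, (1 - X ^ w i : R[X])).leadingCoeff = (-1) ^ Fintype.card ι := by
  rw [leadingCoeff_prod' _ _
    (prod_leadingCoeff_one_sub_X_pow (R := R) hw ▸ neg_one_pow_ne_zero _),
    prod_leadingCoeff_one_sub_X_pow hw]

theorem natDegree_prod_one_sub_X_pow (hw : ∀ i, 0 < w i) :
    (∏ i, (1 - X ^ w i : R[X])).natDegree = ∑ i, w i := by
  rw [natDegree_prod' _ _ (prod_leadingCoeff_one_sub_X_pow (R := R) hw ▸ neg_one_pow_ne_zero _)]
  simp [natDegree_one_sub_X_pow]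

end Polynomial

namespace PowerSeries

theorem exists_mem_Ioc_coeff_ne_zero_of_coe_mul_eq_one {R : Type*} [CommRing R] [Nontrivial R]
    {q : R[X]} (hq : IsUnit q.leadingCoeff) (hdeg : 0 < q.natDegree) {F : R⟦X⟧}
    (hF : (q : R⟦X⟧) * F = 1) (t : ℕ) :
    ∃ n ∈ Set.Ioc t (t + q.natDegree), coeff n F ≠ 0 := by
  by_contra! hgap
  have htrunc : trunc (t + q.natDegree + 1) F = trunc (t + 1) F := by
    ext j
    simp only [coeff_trunc]
    split_ifs
    · rfl
    · exact hgap j ⟨by omega, by omega⟩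
    · omega
    · rfl
  have hinv : q * trunc (t + 1) F = 1 := by
    have hlt : (q * trunc (t + 1) F).natDegree < t + q.natDegree + 1 :=
      Polynomial.natDegree_mul_le.trans_lt (by have := natDegree_trunc_lt F t; omega)
    rw [← trunc_coe_eq_self hlt, Polynomial.coe_mul, ← htrunc, trunc_mul_trunc, hF, trunc_one]
  have hA : trunc (t + 1) F ≠ 0 := by
    rintro h
    simp [h] at hinv
  have := Polynomial.natDegree_mul' (p := q) (q := trunc (t + 1) F)
    (by rwa [Ne, hq.mul_right_eq_zero, Polynomial.leadingCoeff_eq_zero])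
  rw [hinv, Polynomial.natDegree_one] at this
  omega

variable (R : Type*) [CommRing R]

def multiplesIndicator (d : ℕ) : R⟦X⟧ :=
  mk fun n => if d ∣ n then 1 else 0

variable {R}

theorem one_sub_X_pow_mul_multiplesIndicator {d : ℕ} (hd : 0 < d) :
    (1 - X ^ d) * multiplesIndicator R d = 1 := by
  ext n
  rw [sub_mul, one_mul, map_sub, coeff_X_pow_mul', multiplesIndicator, coeff_mk, coeff_one]
  rcases Nat.eq_zero_or_pos n with rfl | hn
  · simp [hd.ne']
  · by_cases h : d ∣ n
    · simp [h, hn.ne', Nat.le_of_dvd hn h, Nat.dvd_sub_self_right]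
    · have : ¬ (d ≤ n ∧ n ≤ d) := fun h' => h (le_antisymm h'.1 h'.2 ▸ dvd_rfl)
      simp_all [hn.ne', Nat.dvd_sub_self_right]

end PowerSeries

noncomputable def denumerant {ι : Type*} [Fintype ι] (w : ι → ℕ) (n : ℕ) : ℕ :=
  Nat.card {x : ι → ℕ // ∑ i, w i * x i = n}

section Denumerant

variable {ι : Type*} [Fintype ι] {w : ι → ℕ}

theorem denumerant_eq_card_filter [DecidableEq ι] (hw : ∀ i, 0 < w i) (n : ℕ) :
    denumerant w n = #{l ∈ finsuppAntidiag univ n | ∀ i, w i ∣ l i} := by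
  rw [denumerant, ← Nat.card_eq_finsetCard]
  refine Nat.card_congr
    { toFun x := ⟨Finsupp.equivFunOnFinite.symm fun i => w i * x.1 i, by simp [x.2]⟩
      invFun l := ⟨fun i => l.1 i / w i, ?_⟩
      left_inv x := ?_
      right_inv l := ?_ }
  · have hl := l.2
    simp only [mem_filter, mem_finsuppAntidiag] at hl
    simp [Nat.mul_div_cancel' (hl.2 _), ← hl.1.1]
  · ext i
    simp [Nat.mul_div_cancel_left _ (hw i)]
  · ext i
    simp [Nat.mul_div_cancel' ((mem_filter.1 l.2).2 i)]

open PowerSeries in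
theorem mk_denumerant_eq_prod {R : Type*} [CommRing R] (hw : ∀ i, 0 < w i) :
    mk (fun n => (denumerant w n : R)) = ∏ i, multiplesIndicator R (w i) := by
  classical
  ext n
  simp only [coeff_mk, coeff_prod, multiplesIndicator, Fintype.prod_boole, sum_boole,
    denumerant_eq_card_filter hw]

theorem coe_prod_one_sub_X_pow_mul_mk_denumerant {R : Type*} [CommRing R] (hw : ∀ i, 0 < w i) :
    (↑(∏ i, (1 - Polynomial.X ^ w i) : R[X]) : R⟦X⟧) *
      PowerSeries.mk (fun n => (denumerant w n : R)) = 1 := by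
  rw [mk_denumerant_eq_prod hw, ← Polynomial.coeToPowerSeries.ringHom_apply, map_prod,
    ← prod_mul_distrib]
  simp [PowerSeries.one_sub_X_pow_mul_multiplesIndicator (hw _)]

theorem exists_mem_Ioc_not_dvd_denumerant [Nonempty ι] (hw : ∀ i, 0 < w i) {m : ℕ} (hm : 1 < m)
    (t : ℕ) : ∃ n ∈ Set.Ioc t (t + ∑ i, w i), ¬ m ∣ denumerant w n := by
  have : Fact (1 < m) := ⟨hm⟩
  have hdeg := Polynomial.natDegree_prod_one_sub_X_pow (R := ZMod m) hw
  have hlc : IsUnit (∏ i, (1 - Polynomial.X ^ w i : (ZMod m)[X])).leadingCoeff := by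
    rw [Polynomial.leadingCoeff_prod_one_sub_X_pow hw]
    exact isUnit_neg_one.pow _
  obtain ⟨n, hn, hne⟩ := PowerSeries.exists_mem_Ioc_coeff_ne_zero_of_coe_mul_eq_one hlc
    (hdeg ▸ sum_pos (fun i _ => hw i) univ_nonempty)
    (coe_prod_one_sub_X_pow_mul_mk_denumerant hw) t
  refine ⟨n, hdeg ▸ hn, ?_⟩
  rwa [PowerSeries.coeff_mk, Ne, ZMod.natCast_eq_zero_iff] at hne

end Denumerant

section Density

variable {P : ℕ → Prop}

theorem finite_subtype_le_and (N : ℕ) : Finite {n // n ≤ N ∧ P n} :=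
  ((Set.finite_Iic N).subset (t := {n | n ≤ N ∧ P n}) fun _ hn => hn.1).to_subtype

theorem card_subtype_le_and_le_succ (N : ℕ) : Nat.card {n // n ≤ N ∧ P n} ≤ N + 1 :=
  (Nat.card_mono (Set.finite_Iic N) (s := {n | n ≤ N ∧ P n}) fun _ hn => hn.1).trans (by simp)

theorem div_le_card_of_forall_exists_mem_Ioc {D : ℕ} (h : ∀ t, ∃ n ∈ Set.Ioc t (t + D), P n)
    (N : ℕ) : N / D ≤ Nat.card {n // n ≤ N ∧ P n} := by
  choose f hf hP using h
  have hmono : StrictMono fun i : Fin (N / D) => f (i * D) := fun i j hij =>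
    calc f (i * D) ≤ (i + 1) * D := by simpa [add_one_mul] using (hf _).2
      _ ≤ j * D := Nat.mul_le_mul_right D hij
      _ < f (j * D) := (hf _).1
  have hle (i : Fin (N / D)) : f (i * D) ≤ N :=
    calc f (i * D) ≤ (i + 1) * D := by simpa [add_one_mul] using (hf _).2
      _ ≤ N / D * D := Nat.mul_le_mul_right D i.2
      _ ≤ N := Nat.div_mul_le_self N D
  have := finite_subtype_le_and (P := P) N
  simpa using Nat.card_le_card_of_injective (fun i => ⟨f (i * D), hle i, hP _⟩)
    fun i j hij => hmono.injective (congrArg Subtype.val hij)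

theorem one_div_le_liminf_card_div {D : ℕ} (h : ∀ t, ∃ n ∈ Set.Ioc t (t + D), P n) :
    (1 : ℝ) / D ≤ liminf (fun N : ℕ => (Nat.card {n // n ≤ N ∧ P n} : ℝ) / N) atTop := by
  obtain ⟨n, hn, -⟩ := h 0
  have hD : (0 : ℝ) < D := by
    simp only [Set.mem_Ioc, zero_add] at hn
    exact_mod_cast hn.1.trans_le hn.2
  have hlower : ∀ᶠ N : ℕ in atTop,
      (1 : ℝ) / D - 1 / N ≤ (Nat.card {n // n ≤ N ∧ P n} : ℝ) / N := by
    filter_upwards [eventually_gt_atTop 0] with N hN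
    have hN : (0 : ℝ) < N := by exact_mod_cast hN
    calc (1 : ℝ) / D - 1 / N = ((N : ℝ) / D - 1) / N := by field_simp
      _ ≤ ((N / D : ℕ) : ℝ) / N := by
        gcongr
        rw [← Nat.floor_div_eq_div (K := ℝ)]
        exact (Nat.sub_one_lt_floor _).le
      _ ≤ _ := by gcongr; exact_mod_cast div_le_card_of_forall_exists_mem_Ioc h N
  have hupper : ∀ᶠ N : ℕ in atTop, (Nat.card {n // n ≤ N ∧ P n} : ℝ) / N ≤ 2 := by
    filter_upwards [eventually_gt_atTop 0] with N hN
    have hN : (1 : ℝ) ≤ N := by exact_mod_cast hN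
    rw [div_le_iff₀ (by positivity)]
    have : (Nat.card {n // n ≤ N ∧ P n} : ℝ) ≤ N + 1 := by
      exact_mod_cast card_subtype_le_and_le_succ N
    linarith
  have hlim : Tendsto (fun N : ℕ => (1 : ℝ) / D - 1 / N) atTop (𝓝 (1 / D)) := by
    simpa using tendsto_one_div_atTop_nhds_zero_nat.const_sub ((1 : ℝ) / D)
  rw [← hlim.liminf_eq]
  exact liminf_le_liminf hlower hlim.isBoundedUnder_ge
    (isCoboundedUnder_ge_of_eventually_le _ hupper)

end Density

theorem card_eq_denumerant_uncurry {r k : ℕ} (a : Fin r → ℕ) (n : ℕ) :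
    Nat.card {x : Fin r → Fin k → ℕ // ∑ i, ∑ j, a i * x i j = n} =
      denumerant (fun t : Fin r × Fin k => a t.1) n :=
  Nat.card_congr <| (Equiv.curry _ _ _).symm.subtypeEquiv fun x => by
    simp [Fintype.sum_prod_type]

/-- Lower bound for the density of `{n : p_a^k(n) ≢ 0 (mod m)}`. -/
theorem stmt_11 (r k : ℕ) (hr : 1 ≤ r) (hk : 2 ≤ k) (a : Fin r → ℕ)
    (ha : ∀ i, 0 < a i) (m : ℕ) (hm : 1 < m) :
    (1 : ℝ) / (k * ∑ i, (a i : ℝ)) ≤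
      Filter.liminf (fun N : ℕ =>
        (Nat.card {n : ℕ // n ≤ N ∧
          ¬ (m ∣ Nat.card {x : Fin r → Fin k → ℕ // ∑ i, ∑ j, a i * x i j = n})} : ℝ)
          / (N : ℝ))
        Filter.atTop := by
  have : Nonempty (Fin r × Fin k) := ⟨(⟨0, hr⟩, ⟨0, by omega⟩)⟩
  have hweight : (k * ∑ i, (a i : ℝ)) = ((∑ t : Fin r × Fin k, a t.1 : ℕ) : ℝ) := by
    simp [Fintype.sum_prod_type, mul_sum]
  rw [hweight]
  refine one_div_le_liminf_card_div fun t => ?_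
  simpa only [card_eq_denumerant_uncurry] using
    exists_mem_Ioc_not_dvd_denumerant (fun t : Fin r × Fin k => ha t.1) hm t
end
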